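/- arXiv:1411.3017 — 3 statements merged into one kernel-verified Lean document; each statement's English description precedes it below -/
import Mathlib

section
/- Let S be a sampling set on a graph G such that span(u₁,...,u_m) ∩ span(e_j : j ∈ Sᶜ) = {0}, where u₁,...,u_m are the eigenvectors of the normalized Laplacian corresponding to the m smallest eigenvalues. Then the restriction map f ↦ f(S) is injective on PW_{λ_m}(G), so any f ∈ PW_{λ_m}(G) is uniquely determined by its values on S. -/
open Matrix

lemma mem_span_singles {n : ℕ} (S : Set (Fin n)) (h : Fin n → ℝ)
    (hz : ∀ v ∈ S, h v = 0) :
    h ∈ Submodule.span ℝ ((fun j => Pi.single j (1 : ℝ)) '' {j | j ∉ S}) := by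
  have : h = ∑ j : Fin n, h j • (Pi.single j (1 : ℝ) : Fin n → ℝ) := by
    funext v
    simp [Finset.sum_apply, Pi.single_apply]
  rw [this]
  apply Submodule.sum_mem
  intro j _
  by_cases hj : j ∈ S
  · simp [hz j hj]
  · exact Submodule.smul_mem _ _ (Submodule.subset_span ⟨j, hj, rfl⟩)

/-- if `span(u₁,...,u_m) ∩ span(e_j : j ∈ Sᶜ) = {0}`, where `u₁,...,u_m`
are the eigenvectors of the normalized Laplacian corresponding to the `m` smallest
eigenvalues, the restriction map `f ↦ f(S)` is injective on `PW_{λ_m}(G)`: any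
`f ∈ PW_{λ_m}(G)` is determined by its values on `S`. -/
theorem bandlimited_determined_by_samples {n : ℕ}
    (𝓛 : Matrix (Fin n) (Fin n) ℝ) (hsym : 𝓛.IsSymm)
    (u : Fin n → (Fin n → ℝ)) (lam : Fin n → ℝ)
    (huon : ∀ i j, u i ⬝ᵥ u j = if i = j then (1 : ℝ) else 0)
    (heig : ∀ i, 𝓛.mulVec (u i) = lam i • u i)
    (hlamnn : ∀ i, 0 ≤ lam i) (hmono : Monotone lam)
    (m : Fin n) (hfirst : ∀ i : Fin n, lam i ≤ lam m ↔ i ≤ m)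
    (S : Set (Fin n))
    (hS : Submodule.span ℝ (u '' {i | i ≤ m}) ⊓
        Submodule.span ℝ ((fun j => Pi.single j (1 : ℝ)) '' {j | j ∉ S}) = ⊥) :
    ∀ f g : Fin n → ℝ,
      f ∈ Submodule.span ℝ (u '' {i | lam i ≤ lam m}) →
      g ∈ Submodule.span ℝ (u '' {i | lam i ≤ lam m}) →
      (∀ v ∈ S, f v = g v) → f = g := by
  intro f g hf hg hfg
  have hsets : {i : Fin n | lam i ≤ lam m} = {i | i ≤ m} := by
    ext i; exact hfirst i
  rw [hsets] at hf hg
  have h1 : f - g ∈ Submodule.span ℝ (u '' {i | i ≤ m}) := Submodule.sub_mem _ hf hg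
  have h2 : f - g ∈ Submodule.span ℝ ((fun j => Pi.single j (1 : ℝ)) '' {j | j ∉ S}) :=
    mem_span_singles S (f - g) (fun v hv => by simp [hfg v hv])
  have : f - g ∈ (⊥ : Submodule ℝ (Fin n → ℝ)) := hS ▸ Submodule.mem_inf.mpr ⟨h1, h2⟩
  have := Submodule.mem_bot ℝ |>.mp this
  exact sub_eq_zero.mp this
end

section
/- Let S ⊆ {1,...,n} and let (𝓛ᵏ)_{Sᶜ} be the principal submatrix of 𝓛ᵏ indexed by Sᶜ, with smallest eigenvalue σ_{1,k}. If (σ_{1,k})^{1/k} > ω, then S is a uniqueness set for PW_ω(G): any nonzero φ supported on Sᶜ satisfies φᵀ𝓛ᵏφ ≥ σ_{1,k}‖φ‖², while any nonzero φ ∈ PW_ω(G) satisfies φᵀ𝓛ᵏφ ≤ ωᵏ‖φ‖², so PW_ω(G) ∩ L₂(Sᶜ) = {0}. -/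
open Matrix

/-- `L₂(Sᶜ)`: the subspace of vectors in `ℝⁿ` vanishing on all coordinates in `S`. -/
def L2compl {n : ℕ} (S : Set (Fin n)) : Submodule ℝ (Fin n → ℝ) where
  carrier := {x | ∀ i ∈ S, x i = 0}
  add_mem' := by intro a b ha hb i hi; simp [ha i hi, hb i hi]
  zero_mem' := by intro i _; rfl
  smul_mem' := by intro c x hx i hi; simp [hx i hi]

private lemma sum_compl_aux {n : ℕ} (S : Finset (Fin n)) (f : Fin n → ℝ)
    (hf : ∀ i ∈ S, f i = 0) : ∑ i, f i = ∑ j : {j : Fin n // j ∉ S}, f j.val := by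
  classical
  rw [← Finset.sum_subtype (Sᶜ) (fun x => Finset.mem_compl) f]
  exact (Finset.sum_subset (Finset.subset_univ _)
    (fun x _ hx => hf x (by simpa using hx))).symm

private lemma dot_sum_left {n : ℕ} {α : Type*} (s : Finset α) (f : α → (Fin n → ℝ))
    (w : Fin n → ℝ) : (∑ i ∈ s, f i) ⬝ᵥ w = ∑ i ∈ s, f i ⬝ᵥ w := by
  simp [dotProduct, Finset.sum_mul]
  rw [Finset.sum_comm]

private lemma mulVec_sum' {n : ℕ} {α : Type*} (M : Matrix (Fin n) (Fin n) ℝ)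
    (s : Finset α) (f : α → (Fin n → ℝ)) :
    M *ᵥ (∑ i ∈ s, f i) = ∑ i ∈ s, M *ᵥ f i := by
  funext x
  simp [mulVec, dotProduct, Finset.mul_sum]
  rw [Finset.sum_comm]

/-- extension by zero preserves dot products against the principal submatrix -/
private lemma ext_dot {n : ℕ} (S : Finset (Fin n)) (M : Matrix (Fin n) (Fin n) ℝ)
    (y : Fin n → ℝ) (hy : ∀ i ∈ S, y i = 0) :
    y ⬝ᵥ (M *ᵥ y) = (fun j : {j : Fin n // j ∉ S} => y j.val) ⬝ᵥ
      ((M.submatrix Subtype.val Subtype.val) *ᵥ fun j : {j : Fin n // j ∉ S} => y j.val) := by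
  classical
  simp only [dotProduct, mulVec, submatrix_apply]
  rw [sum_compl_aux S _ (fun i hi => by rw [hy i hi, zero_mul])]
  refine Finset.sum_congr rfl fun j _ => ?_
  congr 1
  exact sum_compl_aux S _ (fun i hi => by rw [hy i hi, mul_zero])

private lemma eig_pow {n : ℕ} (𝓛 : Matrix (Fin n) (Fin n) ℝ) (u : Fin n → (Fin n → ℝ))
    (lam : Fin n → ℝ) (heig : ∀ i, 𝓛.mulVec (u i) = lam i • u i) (m : ℕ) (i : Fin n) :
    (𝓛 ^ m) *ᵥ u i = (lam i ^ m) • u i := by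
  induction m with
  | zero => simp [Matrix.one_mulVec]
  | succ m ih =>
    rw [pow_succ, ← Matrix.mulVec_mulVec, heig i, Matrix.mulVec_smul, ih, pow_succ,
      smul_smul, mul_comm]

private lemma ext_dot_self {n : ℕ} (S : Finset (Fin n))
    (y : Fin n → ℝ) (hy : ∀ i ∈ S, y i = 0) :
    y ⬝ᵥ y = (fun j : {j : Fin n // j ∉ S} => y j.val) ⬝ᵥ
      (fun j : {j : Fin n // j ∉ S} => y j.val) := by
  classical
  simp only [dotProduct]
  exact sum_compl_aux S _ (fun i hi => by rw [hy i hi, zero_mul])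

/-- if `σ_{1,k}`, the smallest eigenvalue of the principal submatrix
`(𝓛ᵏ)_{Sᶜ}`, satisfies `(σ_{1,k})^{1/k} > ω`, then `S` is a uniqueness set for
`PW_ω(G)`, i.e. `PW_ω(G) ∩ L₂(Sᶜ) = {0}`. -/
theorem submatrix_eigenvalue_lower_bound_gives_uniqueness {n : ℕ}
    (𝓛 : Matrix (Fin n) (Fin n) ℝ) (hpsd : 𝓛.PosSemidef)
    (u : Fin n → (Fin n → ℝ)) (lam : Fin n → ℝ)
    (huon : ∀ i j, u i ⬝ᵥ u j = if i = j then (1 : ℝ) else 0)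
    (heig : ∀ i, 𝓛.mulVec (u i) = lam i • u i)
    (hlamnn : ∀ i, 0 ≤ lam i) (hmono : Monotone lam)
    (S : Finset (Fin n)) (k : ℕ) (hk : 1 ≤ k) (σ : ℝ)
    (hev : ∃ v : {j : Fin n // j ∉ S} → ℝ, v ≠ 0 ∧
      ((𝓛 ^ k).submatrix Subtype.val Subtype.val).mulVec v = σ • v)
    (hmin : ∀ (μ : ℝ) (v : {j : Fin n // j ∉ S} → ℝ), v ≠ 0 →
      ((𝓛 ^ k).submatrix Subtype.val Subtype.val).mulVec v = μ • v → σ ≤ μ)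
    (ω : ℝ) (hω : ω < σ ^ ((1 : ℝ) / k)) :
    (∀ f g : Fin n → ℝ,
        f ∈ Submodule.span ℝ (u '' {i | lam i ≤ ω}) →
        g ∈ Submodule.span ℝ (u '' {i | lam i ≤ ω}) →
        (∀ v ∈ S, f v = g v) → f = g) ∧
      Submodule.span ℝ (u '' {i | lam i ≤ ω}) ⊓ L2compl (S : Set (Fin n)) = ⊥ := by
  classical
  set M := 𝓛 ^ k with hMdef
  set A := M.submatrix (Subtype.val : {j : Fin n // j ∉ S} → Fin n) Subtype.val with hAdef
  have hMpsd : M.PosSemidef := hpsd.pow k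
  -- A is PSD
  have hAherm : A.IsHermitian := by
    show Aᴴ = A
    rw [hAdef, conjTranspose_submatrix, hMpsd.1.eq]
  have hApsd : A.PosSemidef := by
    refine .of_dotProduct_mulVec_nonneg hAherm fun x => ?_
    set y : Fin n → ℝ := fun i => if h : i ∉ S then x ⟨i, h⟩ else 0 with hy
    have hyS : ∀ i ∈ S, y i = 0 := fun i hi => by simp [hy, hi]
    have hxy : (fun j : {j : Fin n // j ∉ S} => y j.val) = x := by
      funext j; simp [hy, j.prop]
    have := ext_dot S M y hyS
    rw [hxy] at this
    have h0 := hMpsd.dotProduct_mulVec_nonneg y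
    simp only [star_trivial] at h0 ⊢
    rw [← this]; exact h0
  -- σ is nonneg
  obtain ⟨v₀, hv₀ne, hv₀⟩ := hev
  have hv₀pos : 0 < v₀ ⬝ᵥ v₀ := by
    rcases lt_or_eq_of_le (Finset.sum_nonneg fun i _ => mul_self_nonneg (v₀ i) : (0:ℝ) ≤ v₀ ⬝ᵥ v₀) with h | h
    · exact h
    · exact absurd (dotProduct_self_eq_zero.mp h.symm) hv₀ne
  have hσ0 : 0 ≤ σ := by
    have h1 : v₀ ⬝ᵥ (A *ᵥ v₀) = σ * (v₀ ⬝ᵥ v₀) := by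
      rw [hv₀, dotProduct_smul, smul_eq_mul]
    have h2 : 0 ≤ v₀ ⬝ᵥ (A *ᵥ v₀) := by simpa using hApsd.dotProduct_mulVec_nonneg v₀
    by_contra hneg
    push_neg at hneg
    exact absurd (h1 ▸ h2) (not_le.mpr (mul_neg_of_neg_of_pos hneg hv₀pos))
  -- Rayleigh lower bound: σ * (x ⬝ x) ≤ x ⬝ (A x)
  have hRayleigh : ∀ x : {j : Fin n // j ∉ S} → ℝ, σ * (x ⬝ᵥ x) ≤ x ⬝ᵥ (A *ᵥ x) := by
    intro x
    set B : Matrix {j : Fin n // j ∉ S} {j : Fin n // j ∉ S} ℝ := A - σ • 1 with hBdef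
    have hBherm : B.IsHermitian := by
      show Bᴴ = B
      rw [hBdef, conjTranspose_sub, hAherm.eq, conjTranspose_smul, conjTranspose_one,
        star_trivial]
    have hBpsd : B.PosSemidef := by
      refine hBherm.posSemidef_iff_eigenvalues_nonneg.mpr fun j => (?_ : 0 ≤ hBherm.eigenvalues j)
      have hw := hBherm.mulVec_eigenvectorBasis j
      have hwne : (⇑(hBherm.eigenvectorBasis j) : {j : Fin n // j ∉ S} → ℝ) ≠ 0 := by
        intro h
        exact hBherm.eigenvectorBasis.orthonormal.ne_zero j (by ext i; exact congrFun h i)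
      have hAw : A *ᵥ ⇑(hBherm.eigenvectorBasis j)
          = (hBherm.eigenvalues j + σ) • ⇑(hBherm.eigenvectorBasis j) := by
        have : A = B + σ • 1 := by rw [hBdef, sub_add_cancel]
        rw [this, add_mulVec, hw, smul_mulVec, one_mulVec, add_smul]
      have := hmin (hBherm.eigenvalues j + σ) _ hwne hAw
      linarith
    have h0 := hBpsd.dotProduct_mulVec_nonneg x
    simp only [star_trivial, hBdef, sub_mulVec, dotProduct_sub, smul_mulVec,
      one_mulVec, dotProduct_smul, smul_eq_mul] at h0
    linarith
  -- eigen relation for powers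
  have heigk : ∀ i, M *ᵥ u i = (lam i ^ k) • u i := fun i => eig_pow 𝓛 u lam heig k i
  -- key: intersection is trivial
  have key : ∀ φ : Fin n → ℝ, φ ∈ Submodule.span ℝ (u '' {i | lam i ≤ ω}) →
      (∀ i ∈ S, φ i = 0) → φ = 0 := by
    intro φ hφ1 hφ2
    by_contra hφne
    rcases lt_or_ge ω 0 with hω0 | hω0
    · have hempty : {i : Fin n | lam i ≤ ω} = ∅ := by
        ext i; simp only [Set.mem_setOf_eq, Set.mem_empty_iff_false, iff_false, not_le]
        exact lt_of_lt_of_le hω0 (hlamnn i)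
      rw [hempty, Set.image_empty, Submodule.span_empty, Submodule.mem_bot] at hφ1
      exact hφne hφ1
    -- ω ≥ 0 case
    have hωk : ω ^ k < σ := by
      have h1 : ω ^ k < (σ ^ ((1 : ℝ) / k)) ^ k :=
        pow_lt_pow_left₀ hω hω0 (Nat.one_le_iff_ne_zero.mp hk)
      have h2 : (σ ^ ((1 : ℝ) / k)) ^ k = σ := by
        rw [← Real.rpow_natCast (σ ^ ((1 : ℝ) / k)) k, ← Real.rpow_mul hσ0, one_div,
          inv_mul_cancel₀ (Nat.cast_ne_zero.mpr (Nat.one_le_iff_ne_zero.mp hk)),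
          Real.rpow_one]
      rwa [h2] at h1
    rw [Finsupp.mem_span_image_iff_linearCombination] at hφ1
    obtain ⟨l, hls, hl⟩ := hφ1
    have hlsup : ∀ i ∈ l.support, lam i ≤ ω := by
      intro i hi
      exact (Finsupp.mem_supported ℝ l).mp hls hi
    have hφeq : φ = ∑ i ∈ l.support, l i • u i := by
      rw [← hl, Finsupp.linearCombination_apply, Finsupp.sum]
    -- dot products
    have hdots : ∀ w : Fin n → ℝ, φ ⬝ᵥ w = ∑ i ∈ l.support, l i * (u i ⬝ᵥ w) := by
      intro w
      rw [hφeq, dot_sum_left]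
      exact Finset.sum_congr rfl fun i _ => by rw [smul_dotProduct, smul_eq_mul]
    have hφφ : φ ⬝ᵥ φ = ∑ i ∈ l.support, l i * l i := by
      rw [hdots φ]
      refine Finset.sum_congr rfl fun i hi => ?_
      congr 1
      rw [hφeq, dotProduct_comm, dot_sum_left]
      rw [Finset.sum_eq_single i]
      · rw [smul_dotProduct, smul_eq_mul, huon, if_pos rfl, mul_one]
      · intro j hj hji
        rw [smul_dotProduct, smul_eq_mul, huon, if_neg hji, mul_zero]
      · intro h; exact absurd hi h
    have hMφ : M *ᵥ φ = ∑ i ∈ l.support, (lam i ^ k * l i) • u i := by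
      rw [hφeq, mulVec_sum']
      refine Finset.sum_congr rfl fun i _ => ?_
      rw [mulVec_smul, heigk i, smul_smul, mul_comm]
    have hφMφ : φ ⬝ᵥ (M *ᵥ φ) = ∑ i ∈ l.support, lam i ^ k * (l i * l i) := by
      rw [hMφ, dotProduct_comm, dot_sum_left]
      refine Finset.sum_congr rfl fun i hi => ?_
      rw [smul_dotProduct, smul_eq_mul, dotProduct_comm, hdots (u i),
        Finset.sum_eq_single i]
      · rw [huon, if_pos rfl, mul_one]; ring
      · intro j hj hji
        rw [huon, if_neg hji, mul_zero]
      · intro h; exact absurd hi h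
    have hub : φ ⬝ᵥ (M *ᵥ φ) ≤ ω ^ k * (φ ⬝ᵥ φ) := by
      rw [hφMφ, hφφ, Finset.mul_sum]
      refine Finset.sum_le_sum fun i hi => ?_
      have h1 : lam i ^ k ≤ ω ^ k := pow_le_pow_left₀ (hlamnn i) (hlsup i hi) k
      have h2 : 0 ≤ l i * l i := mul_self_nonneg _
      exact mul_le_mul_of_nonneg_right h1 h2
    -- restriction
    set v : {j : Fin n // j ∉ S} → ℝ := fun j => φ j.val with hvdef
    have hvne : v ≠ 0 := by
      intro h
      apply hφne
      funext i
      by_cases hi : i ∈ S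
      · exact hφ2 i hi
      · exact congrFun h ⟨i, hi⟩
    have hvpos : 0 < φ ⬝ᵥ φ := by
      rcases lt_or_eq_of_le (Finset.sum_nonneg fun i _ => mul_self_nonneg (φ i) : (0:ℝ) ≤ φ ⬝ᵥ φ) with h | h
      · exact h
      · exact absurd (dotProduct_self_eq_zero.mp h.symm) hφne
    have hd1 : φ ⬝ᵥ (M *ᵥ φ) = v ⬝ᵥ (A *ᵥ v) := ext_dot S M φ hφ2
    have hd2 : φ ⬝ᵥ φ = v ⬝ᵥ v := ext_dot_self S φ hφ2
    have hlb : σ * (φ ⬝ᵥ φ) ≤ φ ⬝ᵥ (M *ᵥ φ) := by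
      rw [hd1, hd2]; exact hRayleigh v
    have : σ * (φ ⬝ᵥ φ) ≤ ω ^ k * (φ ⬝ᵥ φ) := le_trans hlb hub
    have : σ ≤ ω ^ k := le_of_mul_le_mul_right (by linarith [this]) hvpos
    linarith
  constructor
  · intro f g hf hg hfg
    have h1 : f - g ∈ Submodule.span ℝ (u '' {i | lam i ≤ ω}) := Submodule.sub_mem _ hf hg
    have h2 : ∀ i ∈ S, (f - g) i = 0 := by
      intro i hi
      simp [hfg i hi]
    have := key (f - g) h1 h2
    exact sub_eq_zero.mp this
  · rw [Submodule.eq_bot_iff]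
    intro φ hφ
    rw [Submodule.mem_inf] at hφ
    exact key φ hφ.1 (fun i hi => hφ.2 i hi)
end

section
/- Let 𝓛 be an n×n real symmetric PSD matrix, S ⊆ {1,...,n}, and for k ≥ 1 let σ_{1,k} be the smallest eigenvalue of the principal submatrix (𝓛ᵏ)_{Sᶜ}. Then the sequence (σ_{1,k})^{1/k} is nondecreasing in k. -/
open Matrix Finset

private lemma dot_sym' {m : Type*} [Fintype m] {A : Matrix m m ℝ} (hA : Aᵀ = A) (u z : m → ℝ) :
    u ⬝ᵥ A.mulVec z = (A.mulVec u) ⬝ᵥ z := by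
  rw [Matrix.dotProduct_mulVec, ← Matrix.mulVec_transpose, hA]

open scoped MatrixOrder in
private lemma psd_cs' {m : Type*} [Fintype m] [DecidableEq m] {M : Matrix m m ℝ}
    (hM : M.PosSemidef) (u w : m → ℝ) :
    (u ⬝ᵥ M.mulVec w) ^ 2 ≤ (u ⬝ᵥ M.mulVec u) * (w ⬝ᵥ M.mulVec w) := by
  set C := CFC.sqrt M with hC
  have hCs : Cᵀ = C := by
    simpa [Matrix.IsHermitian] using (CFC.sqrt_nonneg M).posSemidef.isHermitian
  have hCC : C * C = M := CFC.sqrt_mul_sqrt_self M hM.nonneg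
  have key : ∀ p q : m → ℝ, p ⬝ᵥ M.mulVec q = (C.mulVec p) ⬝ᵥ (C.mulVec q) := by
    intro p q
    rw [← hCC, ← Matrix.mulVec_mulVec, dot_sym' hCs]
  rw [key u w, key u u, key w w]
  set p := C.mulVec u
  set q := C.mulVec w
  have := Finset.sum_mul_sq_le_sq_mul_sq Finset.univ p q
  simpa [dotProduct, pow_two, mul_comm, mul_left_comm, mul_assoc] using this

private lemma rayleigh_min' {m : Type*} [Fintype m] [DecidableEq m] {A : Matrix m m ℝ}
    (hA : A.IsHermitian) {σ0 : ℝ}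
    (h : ∀ (μ : ℝ) (w : m → ℝ), w ≠ 0 → A.mulVec w = μ • w → σ0 ≤ μ)
    (v : m → ℝ) : σ0 * (v ⬝ᵥ v) ≤ v ⬝ᵥ A.mulVec v := by
  set U : Matrix m m ℝ := (hA.eigenvectorUnitary : Matrix m m ℝ) with hU
  have hUU : U * star U = 1 := Matrix.mem_unitaryGroup_iff.mp hA.eigenvectorUnitary.2
  have hspec : A = U * Matrix.diagonal hA.eigenvalues * star U := by
    have := hA.spectral_theorem
    simpa using this
  have hlam : ∀ i, σ0 ≤ hA.eigenvalues i := by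
    intro i
    have hnz : (⇑(hA.eigenvectorBasis i) : m → ℝ) ≠ 0 := by
      intro h0
      have h1 := hA.eigenvectorBasis.orthonormal.1 i
      rw [show (hA.eigenvectorBasis i) = 0 from by ext j; exact congrFun h0 j] at h1
      simp at h1
    exact h _ _ hnz (hA.mulVec_eigenvectorBasis i)
  set w : m → ℝ := (star U).mulVec v with hw
  have hsU : (star U) = Uᵀ := by
    ext i j; simp [Matrix.star_apply]
  have hflip : ∀ z : m → ℝ, v ⬝ᵥ U.mulVec z = w ⬝ᵥ z := by
    intro z
    rw [Matrix.dotProduct_mulVec, hw, hsU, Matrix.mulVec_transpose]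
  have hA_form : v ⬝ᵥ A.mulVec v = ∑ i, hA.eigenvalues i * (w i)^2 := by
    have e1 : v ⬝ᵥ A.mulVec v = v ⬝ᵥ U.mulVec ((Matrix.diagonal hA.eigenvalues).mulVec w) := by
      conv_lhs => rw [hspec]
      simp only [← Matrix.mulVec_mulVec, hw]
    rw [e1, hflip]
    simp only [dotProduct, Matrix.mulVec_diagonal]
    exact Finset.sum_congr rfl fun i _ => by ring
  have hvv : v ⬝ᵥ v = ∑ i, (w i)^2 := by
    have e1 : v ⬝ᵥ U.mulVec w = v ⬝ᵥ v := by
      rw [hw, Matrix.mulVec_mulVec, hUU, Matrix.one_mulVec]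
    rw [← e1, hflip]
    simp [dotProduct, pow_two]
  rw [hA_form, hvv, Finset.mul_sum]
  exact Finset.sum_le_sum fun i _ => mul_le_mul_of_nonneg_right (hlam i) (sq_nonneg _)

private lemma logconvex_pow' {a : ℕ → ℝ} (h0 : ∀ j, 0 ≤ a j)
    (hlc : ∀ j, a (j+1) ^ 2 ≤ a j * a (j+2)) :
    ∀ j, a j ^ (j+1) ≤ a (j+1) ^ j * a 0 := by
  intro j
  induction j with
  | zero => simp
  | succ j ih =>
    by_cases hz : a (j+1) = 0
    · rw [hz]
      have : (0:ℝ) ^ (j + 1 + 1) = 0 := zero_pow (by omega)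
      rw [this]
      exact mul_nonneg (pow_nonneg (h0 _) _) (h0 0)
    have hpos : 0 < a (j+1) := (h0 _).lt_of_ne (Ne.symm hz)
    have h1 : (a (j+1) ^ 2) ^ (j+1) ≤ (a j * a (j+2)) ^ (j+1) :=
      pow_le_pow_left₀ (sq_nonneg _) (hlc j) _
    have h2 : a (j+1) ^ (j + (j+2)) ≤ a (j+1) ^ j * (a (j+2) ^ (j+1) * a 0) := by
      calc a (j+1) ^ (j + (j+2)) = (a (j+1) ^ 2) ^ (j+1) := by
            rw [← pow_mul]; congr 1; omega
        _ ≤ (a j * a (j+2)) ^ (j+1) := h1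
        _ = a j ^ (j+1) * a (j+2) ^ (j+1) := by rw [mul_pow]
        _ ≤ (a (j+1) ^ j * a 0) * a (j+2) ^ (j+1) :=
            mul_le_mul_of_nonneg_right ih (pow_nonneg (h0 _) _)
        _ = a (j+1) ^ j * (a (j+2) ^ (j+1) * a 0) := by ring
    have h3 : a (j+1) ^ j * a (j+1) ^ (j+2) ≤ a (j+1) ^ j * (a (j+2) ^ (j+1) * a 0) := by
      calc a (j+1) ^ j * a (j+1) ^ (j+2) = a (j+1) ^ (j + (j+2)) := by rw [← pow_add]
        _ ≤ _ := h2
    have h4 := (mul_le_mul_iff_right₀ (pow_pos hpos j)).mp h3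
    calc a (j+1) ^ (j+1+1) = a (j+1) ^ (j+2) := by norm_num
      _ ≤ a (j+2) ^ (j+1) * a 0 := by linarith

/-- for a real symmetric PSD matrix `𝓛` and `S ⊆ {1,...,n}`, letting
`σ_{1,k}` be the smallest eigenvalue of the principal submatrix `(𝓛ᵏ)_{Sᶜ}`, the
sequence `(σ_{1,k})^{1/k}` is nondecreasing in `k`. -/
theorem cutoff_lower_bound_sequence_monotone {n : ℕ}
    (𝓛 : Matrix (Fin n) (Fin n) ℝ) (hpsd : 𝓛.PosSemidef)
    (S : Finset (Fin n)) (σ : ℕ → ℝ)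
    (hev : ∀ k, 1 ≤ k → ∃ v : {j : Fin n // j ∉ S} → ℝ, v ≠ 0 ∧
      ((𝓛 ^ k).submatrix Subtype.val Subtype.val).mulVec v = σ k • v)
    (hmin : ∀ k, 1 ≤ k → ∀ (μ : ℝ) (v : {j : Fin n // j ∉ S} → ℝ), v ≠ 0 →
      ((𝓛 ^ k).submatrix Subtype.val Subtype.val).mulVec v = μ • v → σ k ≤ μ) :
    ∀ k, 1 ≤ k → (σ k) ^ ((1 : ℝ) / k) ≤ (σ (k + 1)) ^ ((1 : ℝ) / (k + 1)) := by
  classical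
  intro k hk
  obtain ⟨v, hv0, hv⟩ := hev (k+1) (by omega)
  -- the zero-extension of `v` to `Fin n`
  set x : Fin n → ℝ := fun i => if h : i ∉ S then v ⟨i, h⟩ else 0 with hx
  have hxS : ∀ i ∈ S, x i = 0 := by
    intro i hi; simp only [hx]; rw [dif_neg]; simpa using hi
  have hxv : ∀ (i : {j : Fin n // j ∉ S}), x i.val = v i := by
    intro i; simp only [hx]; rw [dif_pos i.prop]
  have sum_ext : ∀ f : Fin n → ℝ, (∀ i ∈ S, f i = 0) →
      ∑ i, f i = ∑ i : {j : Fin n // j ∉ S}, f i.val := by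
    intro f hf
    rw [← Finset.sum_subtype Sᶜ (fun i => by simp) f]
    exact (Finset.sum_subset (Finset.subset_univ _)
      (fun i _ hi => hf i (by simpa using hi))).symm
  -- bridging dot products on the subtype with dot products on `Fin n`
  have bridge : ∀ M : Matrix (Fin n) (Fin n) ℝ,
      v ⬝ᵥ (M.submatrix Subtype.val Subtype.val).mulVec v = x ⬝ᵥ M.mulVec x := by
    intro M
    have h2 : ∀ (i : {j : Fin n // j ∉ S}),
        (M.mulVec x) i.val = ((M.submatrix Subtype.val Subtype.val).mulVec v) i := by
      intro i
      simp only [Matrix.mulVec, dotProduct, Matrix.submatrix_apply]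
      rw [sum_ext (fun l => M i.val l * x l) (fun l hl => by simp [hxS l hl])]
      exact Finset.sum_congr rfl fun l _ => by simp [hxv l]
    have h1 : x ⬝ᵥ M.mulVec x = ∑ i : {j : Fin n // j ∉ S}, v i * (M.mulVec x) i.val := by
      rw [dotProduct,
        sum_ext (fun i => x i * (M.mulVec x) i) (fun i hi => by simp [hxS i hi])]
      exact Finset.sum_congr rfl fun i _ => by simp [hxv i]
    rw [h1, dotProduct]
    exact Finset.sum_congr rfl fun i _ => by rw [h2 i]
  -- the moment sequence
  set a : ℕ → ℝ := fun j => x ⬝ᵥ (𝓛 ^ j).mulVec x with ha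
  have ha0 : ∀ j, 0 ≤ a j := by
    intro j
    have := (hpsd.pow j).dotProduct_mulVec_nonneg x
    simpa [ha] using this
  have cross : ∀ p q : ℕ, ((𝓛 ^ p).mulVec x) ⬝ᵥ ((𝓛 ^ q).mulVec x) = a (p + q) := by
    intro p q
    have hsym : (𝓛 ^ p)ᵀ = 𝓛 ^ p := by
      simpa [Matrix.IsHermitian] using hpsd.isHermitian.pow p
    rw [← dot_sym' hsym x ((𝓛 ^ q).mulVec x), Matrix.mulVec_mulVec, ← pow_add]
  have cross3 : ∀ p c q : ℕ,
      ((𝓛 ^ p).mulVec x) ⬝ᵥ ((𝓛 ^ c).mulVec ((𝓛 ^ q).mulVec x)) = a (p + (c + q)) := by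
    intro p c q
    rw [Matrix.mulVec_mulVec, ← pow_add]
    exact cross p (c + q)
  have key : ∀ p q c : ℕ, a (p + (c + q)) ^ 2 ≤ a (p + (c + p)) * a (q + (c + q)) := by
    intro p q c
    have e := psd_cs' (hpsd.pow c) ((𝓛 ^ p).mulVec x) ((𝓛 ^ q).mulVec x)
    rw [cross3 p c q, cross3 p c p, cross3 q c q] at e
    exact e
  have hlc : ∀ j, a (j+1) ^ 2 ≤ a j * a (j+2) := by
    intro j
    rcases Nat.even_or_odd j with ⟨m, hm⟩ | ⟨m, hm⟩
    · subst hm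
      have h' := key m (m+1) 0
      rw [show m + (0 + (m+1)) = m + m + 1 from by omega,
        show m + (0 + m) = m + m from by omega,
        show m + 1 + (0 + (m+1)) = m + m + 2 from by omega] at h'
      exact h'
    · subst hm
      have h' := key m (m+1) 1
      rw [show m + (1 + (m+1)) = 2*m + 1 + 1 from by omega,
        show m + (1 + m) = 2*m + 1 from by omega,
        show m + 1 + (1 + (m+1)) = 2*m + 1 + 2 from by omega] at h'
      exact h'
  have hineq := logconvex_pow' ha0 hlc
  -- eigenvalue relations
  have hc : 0 < v ⬝ᵥ v := by
    obtain ⟨i0, hi0⟩ := Function.ne_iff.mp hv0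
    exact Finset.sum_pos' (fun i _ => mul_self_nonneg _)
      ⟨i0, Finset.mem_univ _, mul_self_pos.mpr (by simpa using hi0)⟩
  set c : ℝ := v ⬝ᵥ v with hcc
  have ha0eq : a 0 = c := by
    have : a 0 = x ⬝ᵥ x := by
      simp only [ha, pow_zero, Matrix.one_mulVec]
    rw [this, dotProduct,
      sum_ext (fun i => x i * x i) (fun i hi => by simp [hxS i hi])]
    rw [hcc, dotProduct]
    exact Finset.sum_congr rfl fun i _ => by simp [hxv i]
  have hak1 : a (k+1) = σ (k+1) * c := by
    have hb := bridge (𝓛 ^ (k+1))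
    rw [hv] at hb
    show x ⬝ᵥ (𝓛 ^ (k+1)).mulVec x = σ (k+1) * c
    rw [← hb, dotProduct_smul]
    simp [hcc, smul_eq_mul, mul_comm]
  have hrayk : σ k * c ≤ a k := by
    have hHerm : ((𝓛 ^ k).submatrix Subtype.val Subtype.val).IsHermitian :=
      (hpsd.isHermitian.pow k).submatrix (Subtype.val : {j : Fin n // j ∉ S} → Fin n)
    have := rayleigh_min' hHerm (hmin k hk) v
    rwa [bridge (𝓛 ^ k)] at this
  -- nonnegativity of the eigenvalues
  have hσk : 0 ≤ σ k := by
    obtain ⟨u, hu0, hu⟩ := hev k hk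
    have hpsdsub : ((𝓛 ^ k).submatrix Subtype.val Subtype.val).PosSemidef :=
      (hpsd.pow k).submatrix (Subtype.val : {j : Fin n // j ∉ S} → Fin n)
    have h1 : 0 ≤ u ⬝ᵥ ((𝓛 ^ k).submatrix Subtype.val Subtype.val).mulVec u := by
      have := hpsdsub.dotProduct_mulVec_nonneg u; simpa using this
    rw [hu, dotProduct_smul] at h1
    have hcu : 0 < u ⬝ᵥ u := by
      obtain ⟨i0, hi0⟩ := Function.ne_iff.mp hu0
      exact Finset.sum_pos' (fun i _ => mul_self_nonneg _)
        ⟨i0, Finset.mem_univ _, mul_self_pos.mpr (by simpa using hi0)⟩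
    have : 0 ≤ σ k * (u ⬝ᵥ u) := by simpa [smul_eq_mul] using h1
    nlinarith
  have hσk1 : 0 ≤ σ (k+1) := by
    have h1 := ha0 (k+1)
    rw [hak1] at h1
    nlinarith
  -- the natural-power inequality σ k ^ (k+1) ≤ σ (k+1) ^ k
  have hnat : σ k ^ (k+1) ≤ σ (k+1) ^ k := by
    have h2 : (σ k * c) ^ (k+1) ≤ (σ (k+1) * c) ^ k * c := by
      calc (σ k * c) ^ (k+1) ≤ a k ^ (k+1) :=
            pow_le_pow_left₀ (by positivity) hrayk _
        _ ≤ a (k+1) ^ k * a 0 := hineq k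
        _ = (σ (k+1) * c) ^ k * c := by rw [hak1, ha0eq]
    have h3 : σ k ^ (k+1) * c ^ (k+1) ≤ σ (k+1) ^ k * c ^ (k+1) := by
      calc σ k ^ (k+1) * c ^ (k+1) = (σ k * c) ^ (k+1) := by rw [mul_pow]
        _ ≤ (σ (k+1) * c) ^ k * c := h2
        _ = σ (k+1) ^ k * c ^ (k+1) := by rw [mul_pow]; ring
    exact le_of_mul_le_mul_right h3 (pow_pos hc _)
  -- conclude via rpow
  have hk0 : (k : ℝ) ≠ 0 := by
    have : 0 < (k:ℝ) := by exact_mod_cast hk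
    exact ne_of_gt this
  have hk10 : (k : ℝ) + 1 ≠ 0 := by positivity
  set e : ℝ := 1 / ((k:ℝ) * ((k:ℝ) + 1)) with he
  have hepos : 0 ≤ e := by
    have : 0 < (k:ℝ) := by exact_mod_cast hk
    positivity
  have hmono := Real.rpow_le_rpow (by positivity) (show (σ k ^ (k+1) : ℝ) ≤ σ (k+1) ^ k from hnat) hepos
  rw [← Real.rpow_natCast (σ k) (k+1), ← Real.rpow_natCast (σ (k+1)) k,
    ← Real.rpow_mul hσk, ← Real.rpow_mul hσk1] at hmono
  have e1 : ((k+1 : ℕ) : ℝ) * e = 1 / (k : ℝ) := by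
    push_cast; rw [he]; field_simp
  have e2 : ((k : ℕ) : ℝ) * e = 1 / ((k : ℝ) + 1) := by
    push_cast; rw [he]; field_simp
  rw [e1, e2] at hmono
  exact hmono
end
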